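/- (Depth 2 property.) In the depth-2 Jones tower setup: C = spanₖ{a e₂ a' : a, a' ∈ A} and C = spanₖ{b e₁ b' : b, b' ∈ B}; moreover e₁ c e₁ = e₁ E_{M₁}(c) for every c ∈ C. -/

import Mathlib

/-!
By the pull-down lemma `w e₁ = λ⁻¹ E_M(w e₁) e₁` on `M₁`, and since `E_M` maps `A` into
`C_M(N) = k`, every `a ∈ A` satisfies `a e₁, e₁ a ∈ k e₁`; computing `e₁ a e₁` both ways shows
that `a` commutes with `e₁`. Expanding over the orthogonal basis `(zᵢ, wᵢ)` gives
`λ c = ∑ zᵢ e₂ E_{M₁}(e₂ wᵢ c)`, which lies in `A e₂ A` when `c ∈ C`. For the second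
description, `a e₂ a' = λ⁻¹ (a e₂) e₁ (e₂ a')` by the braid relation; expanding `a e₂` and
`e₂ a'` over `(uᵢ, vᵢ)` leaves middle factors `x e₁ y = x y e₁ ∈ k e₁` with `x, y ∈ A`.
Finally `e₁ (a e₂ a') e₁ = a e₁ e₂ e₁ a' = λ e₁ a a' = e₁ E_{M₁}(a e₂ a')`.
-/

open scoped TensorProduct

/-- The depth-2 Jones tower setup: a tower `N ⊆ M ⊆ M₁ ⊆ R` (with `R` playing the
role of `M₂`) of unital `k`-algebras, with conditional expectations, Jones idempotents,
braid-like relations and depth-2 orthogonal dual bases, as in the paper. -/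
structure JonesTower (k : Type*) [Field k] (R : Type*) [Ring R] [Algebra k R] where
  N : Subalgebra k R
  M : Subalgebra k R
  M₁ : Subalgebra k R
  hNM : N ≤ M
  hMM₁ : M ≤ M₁
  lam : k
  hlam : lam ≠ 0
  E : R →ₗ[k] R
  EM : R →ₗ[k] R
  EM1 : R →ₗ[k] R
  hE_mem : ∀ m ∈ M, E m ∈ N
  hEM_mem : ∀ x ∈ M₁, EM x ∈ M
  hEM1_mem : ∀ x : R, EM1 x ∈ M₁
  hE_one : E 1 = 1
  hEM_one : EM 1 = 1
  hEM1_one : EM1 1 = 1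
  hE_bimod : ∀ n ∈ N, ∀ n' ∈ N, ∀ m ∈ M, E (n * m * n') = n * E m * n'
  hEM_bimod : ∀ m ∈ M, ∀ m' ∈ M, ∀ x ∈ M₁, EM (m * x * m') = m * EM x * m'
  hEM1_bimod : ∀ w ∈ M₁, ∀ w' ∈ M₁, ∀ x : R, EM1 (w * x * w') = w * EM1 x * w'
  n₀ : ℕ
  xb : Fin n₀ → R
  yb : Fin n₀ → R
  hxb : ∀ i, xb i ∈ M
  hyb : ∀ i, yb i ∈ M
  hE_dual₁ : ∀ m ∈ M, ∑ i, E (m * xb i) * yb i = m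
  hE_dual₂ : ∀ m ∈ M, ∑ i, xb i * E (yb i * m) = m
  hE_index : ∑ i, xb i * yb i = lam⁻¹ • (1 : R)
  hCMN : ∀ c ∈ M, (∀ n ∈ N, c * n = n * c) → ∃ μ : k, c = μ • (1 : R)
  hCM₁M : ∀ c ∈ M₁, (∀ m ∈ M, c * m = m * c) → ∃ μ : k, c = μ • (1 : R)
  hCM₂M₁ : ∀ c : R, (∀ w ∈ M₁, c * w = w * c) → ∃ μ : k, c = μ • (1 : R)
  e₁ : R
  e₂ : R
  he₁ : e₁ ∈ M₁
  he₁N : ∀ n ∈ N, e₁ * n = n * e₁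
  he₂M : ∀ m ∈ M, e₂ * m = m * e₂
  he₁me₁ : ∀ m ∈ M, e₁ * m * e₁ = E m * e₁
  he₂we₂ : ∀ w ∈ M₁, e₂ * w * e₂ = EM w * e₂
  hEMe₁ : EM e₁ = lam • (1 : R)
  hEM1e₂ : EM1 e₂ = lam • (1 : R)
  hspanM₁ : Subalgebra.toSubmodule M₁ =
    Submodule.span k {x : R | ∃ m ∈ M, ∃ m' ∈ M, x = m * e₁ * m'}
  hspanM₂ : (⊤ : Submodule k R) =
    Submodule.span k {x : R | ∃ w ∈ M₁, ∃ w' ∈ M₁, x = w * e₂ * w'}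
  hbraid₁ : e₁ * e₂ * e₁ = lam • e₁
  hbraid₂ : e₂ * e₁ * e₂ = lam • e₂
  r : ℕ
  zb : Fin r → R
  wb : Fin r → R
  hzbM₁ : ∀ i, zb i ∈ M₁
  hwbM₁ : ∀ i, wb i ∈ M₁
  hzbN : ∀ i, ∀ n ∈ N, zb i * n = n * zb i
  hwbN : ∀ i, ∀ n ∈ N, wb i * n = n * wb i
  hzw_orth : ∀ i j, EM (wb i * zb j) = if i = j then (1 : R) else 0
  hzw_dual₁ : ∀ x ∈ M₁, ∑ i, EM (x * zb i) * wb i = x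
  hzw_dual₂ : ∀ x ∈ M₁, ∑ i, zb i * EM (wb i * x) = x
  hzw_index : ∑ i, zb i * wb i = lam⁻¹ • (1 : R)
  s : ℕ
  ub : Fin s → R
  vb : Fin s → R
  hubM : ∀ i, ∀ m ∈ M, ub i * m = m * ub i
  hvbM : ∀ i, ∀ m ∈ M, vb i * m = m * vb i
  huv_orth : ∀ i j, EM1 (vb i * ub j) = if i = j then (1 : R) else 0
  huv_dual₁ : ∀ x : R, ∑ i, EM1 (x * ub i) * vb i = x
  huv_dual₂ : ∀ x : R, ∑ i, ub i * EM1 (vb i * x) = x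
  huv_index : ∑ i, ub i * vb i = lam⁻¹ • (1 : R)
  F : R →ₗ[k] k
  hF : ∀ c : R, (∀ n ∈ N, c * n = n * c) → algebraMap k R (F c) = EM (EM1 c)

variable {k : Type*} [Field k] {R : Type*} [Ring R] [Algebra k R]

/-- The second centralizer `A = C_{M₁}(N)`. -/
def JonesTower.A (T : JonesTower k R) : Subalgebra k R :=
  T.M₁ ⊓ Subalgebra.centralizer k (T.N : Set R)

/-- The second centralizer `B = C_{M₂}(M)`. -/
def JonesTower.B (T : JonesTower k R) : Subalgebra k R :=
  Subalgebra.centralizer k (T.M : Set R)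

/-- The big centralizer `C = C_{M₂}(N)`. -/
def JonesTower.C (T : JonesTower k R) : Subalgebra k R :=
  Subalgebra.centralizer k (T.N : Set R)

lemma Submodule.span_mul_mul_le_of_le {k R : Type*} [CommSemiring k] [Semiring R] [Algebra k R]
    {S P : Subalgebra k R} (hP : P ≤ S) {y : R} (hy : y ∈ S) :
    Submodule.span k {x : R | ∃ a ∈ P, ∃ a' ∈ P, x = a * y * a'} ≤ Subalgebra.toSubmodule S :=
  Submodule.span_le.2 <| by
    rintro _ ⟨a, ha, a', ha', rfl⟩
    exact (Subalgebra.mem_toSubmodule S).2 (mul_mem (mul_mem (hP ha) hy) (hP ha'))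

namespace JonesTower

variable (T : JonesTower k R)

lemma A_le_C : T.A ≤ T.C := inf_le_right

lemma B_le_C : T.B ≤ T.C := Subalgebra.centralizer_le k _ _ T.hNM

lemma e₁_mem_A : T.e₁ ∈ T.A :=
  ⟨T.he₁, (Subalgebra.mem_centralizer_iff k).2 fun n hn => (T.he₁N n hn).symm⟩

lemma e₂_mem_C : T.e₂ ∈ T.C :=
  (Subalgebra.mem_centralizer_iff k).2 fun n hn => (T.he₂M n (T.hNM hn)).symm

lemma zb_mem_A (i : Fin T.r) : T.zb i ∈ T.A :=
  ⟨T.hzbM₁ i, (Subalgebra.mem_centralizer_iff k).2 fun n hn => (T.hzbN i n hn).symm⟩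

lemma wb_mem_A (i : Fin T.r) : T.wb i ∈ T.A :=
  ⟨T.hwbM₁ i, (Subalgebra.mem_centralizer_iff k).2 fun n hn => (T.hwbN i n hn).symm⟩

lemma ub_mem_B (i : Fin T.s) : T.ub i ∈ T.B :=
  (Subalgebra.mem_centralizer_iff k).2 fun m hm => (T.hubM i m hm).symm

lemma vb_mem_B (i : Fin T.s) : T.vb i ∈ T.B :=
  (Subalgebra.mem_centralizer_iff k).2 fun m hm => (T.hvbM i m hm).symm

lemma e₁_mul_e₁ : T.e₁ * T.e₁ = T.e₁ := by
  simpa [T.hE_one] using T.he₁me₁ 1 (one_mem _)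

lemma EM1_mul_e₂_mul {w w' : R} (hw : w ∈ T.M₁) (hw' : w' ∈ T.M₁) :
    T.EM1 (w * T.e₂ * w') = T.lam • (w * w') := by
  rw [T.hEM1_bimod w hw w' hw', T.hEM1e₂, mul_smul_comm, mul_one, smul_mul_assoc]

lemma EM1_mem_A {c : R} (hc : c ∈ T.C) : T.EM1 c ∈ T.A := by
  refine ⟨T.hEM1_mem c, (Subalgebra.mem_centralizer_iff k).2 fun n hn => ?_⟩
  have hn₁ : n ∈ T.M₁ := T.hMM₁ (T.hNM hn)
  calc n * T.EM1 c = T.EM1 (n * c * 1) := by rw [T.hEM1_bimod n hn₁ 1 (one_mem _), mul_one]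
    _ = T.EM1 (1 * c * n) := by rw [mul_one, one_mul, (Subalgebra.mem_centralizer_iff k).1 hc n hn]
    _ = T.EM1 c * n := by rw [T.hEM1_bimod 1 (one_mem _) n hn₁, one_mul]

lemma exists_EM_eq_smul_one {x : R} (hx : x ∈ T.A) : ∃ μ : k, T.EM x = μ • 1 := by
  obtain ⟨hxM₁, hxN⟩ := hx
  refine T.hCMN _ (T.hEM_mem x hxM₁) fun n hn => ?_
  have hnM : n ∈ T.M := T.hNM hn
  calc T.EM x * n = T.EM (1 * x * n) := by rw [T.hEM_bimod 1 (one_mem _) n hnM x hxM₁, one_mul]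
    _ = T.EM (n * x * 1) := by rw [mul_one, one_mul, (Subalgebra.mem_centralizer_iff k).1 hxN n hn]
    _ = n * T.EM x := by rw [T.hEM_bimod n hnM 1 (one_mem _) x hxM₁, mul_one]

lemma EM_mul_e₁_mul {m m' : R} (hm : m ∈ T.M) (hm' : m' ∈ T.M) :
    T.EM (m * T.e₁ * m') = T.lam • (m * m') := by
  rw [T.hEM_bimod m hm m' hm' _ T.he₁, T.hEMe₁, mul_smul_comm, mul_one, smul_mul_assoc]

lemma mul_e₁_eq_EM_mul_e₁ {w : R} (hw : w ∈ T.M₁) :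
    w * T.e₁ = T.lam⁻¹ • (T.EM (w * T.e₁) * T.e₁) := by
  let f : R →ₗ[k] R := LinearMap.mulRight k T.e₁
  let g : R →ₗ[k] R := T.lam⁻¹ • (f ∘ₗ T.EM ∘ₗ f)
  have hgen : Set.EqOn f g {x | ∃ m ∈ T.M, ∃ m' ∈ T.M, x = m * T.e₁ * m'} := by
    rintro _ ⟨m, hm, m', hm', rfl⟩
    have he : m * T.e₁ * m' * T.e₁ = m * T.E m' * T.e₁ * 1 := by
      rw [mul_one, mul_assoc m, mul_assoc m, T.he₁me₁ m' hm', mul_assoc]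
    simp only [f, g, LinearMap.smul_apply, LinearMap.comp_apply, LinearMap.mulRight_apply]
    rw [he, T.EM_mul_e₁_mul (mul_mem hm (T.hNM (T.hE_mem m' hm'))) (one_mem _)]
    simp only [mul_one, smul_mul_assoc, inv_smul_smul₀ T.hlam]
  exact LinearMap.eqOn_span' hgen (by rw [← T.hspanM₁]; exact hw)

lemma e₁_mul_eq_e₁_mul_EM {w : R} (hw : w ∈ T.M₁) :
    T.e₁ * w = T.lam⁻¹ • (T.e₁ * T.EM (T.e₁ * w)) := by
  let f : R →ₗ[k] R := LinearMap.mulLeft k T.e₁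
  let g : R →ₗ[k] R := T.lam⁻¹ • (f ∘ₗ T.EM ∘ₗ f)
  have hgen : Set.EqOn f g {x | ∃ m ∈ T.M, ∃ m' ∈ T.M, x = m * T.e₁ * m'} := by
    rintro _ ⟨m, hm, m', hm', rfl⟩
    have hEm : T.E m ∈ T.N := T.hE_mem m hm
    have he : T.e₁ * (m * T.e₁ * m') = T.E m * T.e₁ * m' := by
      rw [← mul_assoc, ← mul_assoc, T.he₁me₁ m hm]
    simp only [f, g, LinearMap.smul_apply, LinearMap.comp_apply, LinearMap.mulLeft_apply, he,
      T.EM_mul_e₁_mul (T.hNM hEm) hm', mul_smul_comm, inv_smul_smul₀ T.hlam, ← mul_assoc,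
      T.he₁N _ hEm]
  exact LinearMap.eqOn_span' hgen (by rw [← T.hspanM₁]; exact hw)

lemma exists_mul_e₁_eq_smul {a : R} (ha : a ∈ T.A) : ∃ ν : k, a * T.e₁ = ν • T.e₁ := by
  obtain ⟨μ, hμ⟩ := T.exists_EM_eq_smul_one (mul_mem ha T.e₁_mem_A)
  exact ⟨T.lam⁻¹ * μ, by rw [T.mul_e₁_eq_EM_mul_e₁ ha.1, hμ, smul_mul_assoc, one_mul, smul_smul]⟩

lemma exists_e₁_mul_eq_smul {a : R} (ha : a ∈ T.A) : ∃ ν : k, T.e₁ * a = ν • T.e₁ := by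
  obtain ⟨μ, hμ⟩ := T.exists_EM_eq_smul_one (mul_mem T.e₁_mem_A ha)
  exact ⟨T.lam⁻¹ * μ, by rw [T.e₁_mul_eq_e₁_mul_EM ha.1, hμ, mul_smul_comm, mul_one, smul_smul]⟩

lemma commute_e₁_of_mem_A {a : R} (ha : a ∈ T.A) : Commute a T.e₁ := by
  obtain ⟨ν, hν⟩ := T.exists_mul_e₁_eq_smul ha
  obtain ⟨μ, hμ⟩ := T.exists_e₁_mul_eq_smul ha
  have hνμ : ν • T.e₁ = μ • T.e₁ :=
    calc ν • T.e₁ = T.e₁ * (a * T.e₁) := by rw [hν, mul_smul_comm, T.e₁_mul_e₁]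
      _ = T.e₁ * a * T.e₁ := (mul_assoc _ _ _).symm
      _ = μ • T.e₁ := by rw [hμ, smul_mul_assoc, T.e₁_mul_e₁]
  rw [Commute, SemiconjBy, hν, hμ, hνμ]

lemma sum_zb_e₂_EM1_eq_smul (x : R) :
    ∑ i, T.zb i * T.e₂ * T.EM1 (T.e₂ * T.wb i * x) = T.lam • x := by
  let g : R →ₗ[k] R := ∑ i,
    LinearMap.mulLeft k (T.zb i * T.e₂) ∘ₗ T.EM1 ∘ₗ LinearMap.mulLeft k (T.e₂ * T.wb i)
  have hgen : Set.EqOn g (T.lam • LinearMap.id : R →ₗ[k] R)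
      {y | ∃ w ∈ T.M₁, ∃ w' ∈ T.M₁, y = w * T.e₂ * w'} := by
    rintro _ ⟨w, hw, w', hw', rfl⟩
    have hterm : ∀ i, T.zb i * T.e₂ * T.EM1 (T.e₂ * T.wb i * (w * T.e₂ * w')) =
        T.lam • (T.zb i * T.EM (T.wb i * w) * T.e₂ * w') := by
      intro i
      have hww : T.wb i * w ∈ T.M₁ := mul_mem (T.hwbM₁ i) hw
      have hEM : T.EM (T.wb i * w) ∈ T.M := T.hEM_mem _ hww
      have he : T.e₂ * T.wb i * (w * T.e₂ * w') = T.EM (T.wb i * w) * T.e₂ * w' := by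
        rw [← T.he₂we₂ _ hww]
        simp only [mul_assoc]
      rw [he, T.EM1_mul_e₂_mul (T.hMM₁ hEM) hw', mul_smul_comm, mul_assoc (T.zb i),
        ← mul_assoc T.e₂, T.he₂M _ hEM]
      simp only [mul_assoc]
    simp only [g, LinearMap.sum_apply, LinearMap.comp_apply,
      LinearMap.mulLeft_apply, LinearMap.smul_apply, LinearMap.id_apply, hterm]
    rw [← Finset.smul_sum, ← Finset.sum_mul, ← Finset.sum_mul, T.hzw_dual₂ w hw]
  have hx : x ∈ Submodule.span k {y | ∃ w ∈ T.M₁, ∃ w' ∈ T.M₁, y = w * T.e₂ * w'} := by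
    rw [← T.hspanM₂]
    exact Submodule.mem_top
  simpa [g, mul_assoc] using LinearMap.eqOn_span' hgen hx

lemma C_le_span_A_e₂_A : Subalgebra.toSubmodule T.C ≤
    Submodule.span k {x : R | ∃ a ∈ T.A, ∃ a' ∈ T.A, x = a * T.e₂ * a'} := by
  intro c hc
  rw [← inv_smul_smul₀ T.hlam c, ← T.sum_zb_e₂_EM1_eq_smul c]
  refine Submodule.smul_mem _ _ (Submodule.sum_mem _ fun i _ =>
    Submodule.subset_span ⟨_, T.zb_mem_A i, _, T.EM1_mem_A ?_, rfl⟩)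
  exact mul_mem (mul_mem T.e₂_mem_C (T.A_le_C (T.wb_mem_A i))) hc

lemma mul_e₁_mul_mem_span_B {p q : R} (hp : p ∈ T.C) (hq : q ∈ T.C) :
    p * T.e₁ * q ∈ Submodule.span k {x : R | ∃ b ∈ T.B, ∃ b' ∈ T.B, x = b * T.e₁ * b'} := by
  rw [← T.huv_dual₂ p, ← T.huv_dual₁ q, Finset.sum_mul, Finset.sum_mul]
  refine Submodule.sum_mem _ fun i _ => ?_
  rw [Finset.mul_sum]
  refine Submodule.sum_mem _ fun j _ => ?_
  set x := T.EM1 (T.vb i * p)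
  set y := T.EM1 (q * T.ub j)
  have hx : x ∈ T.A := T.EM1_mem_A (mul_mem (T.B_le_C (T.vb_mem_B i)) hp)
  have hy : y ∈ T.A := T.EM1_mem_A (mul_mem hq (T.B_le_C (T.ub_mem_B j)))
  obtain ⟨ν, hν⟩ := T.exists_mul_e₁_eq_smul (mul_mem hx hy)
  have hterm : T.ub i * x * T.e₁ * (y * T.vb j) = ν • (T.ub i * T.e₁ * T.vb j) :=
    calc T.ub i * x * T.e₁ * (y * T.vb j) = T.ub i * (x * (T.e₁ * y)) * T.vb j := by
          simp only [mul_assoc]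
      _ = T.ub i * (x * y * T.e₁) * T.vb j := by
          rw [← (T.commute_e₁_of_mem_A hy).eq, mul_assoc x]
      _ = ν • (T.ub i * T.e₁ * T.vb j) := by
          rw [hν, mul_smul_comm, smul_mul_assoc]
  rw [hterm]
  exact Submodule.smul_mem _ _ (Submodule.subset_span ⟨_, T.ub_mem_B i, _, T.vb_mem_B j, rfl⟩)

lemma span_A_e₂_A_le_span_B_e₁_B :
    Submodule.span k {x : R | ∃ a ∈ T.A, ∃ a' ∈ T.A, x = a * T.e₂ * a'} ≤
      Submodule.span k {x : R | ∃ b ∈ T.B, ∃ b' ∈ T.B, x = b * T.e₁ * b'} := by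
  refine Submodule.span_le.2 ?_
  rintro _ ⟨a, ha, a', ha', rfl⟩
  have hbraid : a * T.e₂ * a' = T.lam⁻¹ • (a * T.e₂ * T.e₁ * (T.e₂ * a')) := by
    rw [show a * T.e₂ * T.e₁ * (T.e₂ * a') = a * (T.e₂ * T.e₁ * T.e₂) * a' by
      simp only [mul_assoc], T.hbraid₂, mul_smul_comm, smul_mul_assoc, inv_smul_smul₀ T.hlam]
  rw [hbraid]
  exact Submodule.smul_mem _ _ (T.mul_e₁_mul_mem_span_B (mul_mem (T.A_le_C ha) T.e₂_mem_C)
    (mul_mem T.e₂_mem_C (T.A_le_C ha')))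

lemma e₁_mul_mul_e₁_eq_e₁_mul_EM1 {c : R} (hc : c ∈ T.C) :
    T.e₁ * c * T.e₁ = T.e₁ * T.EM1 c := by
  let f : R →ₗ[k] R := LinearMap.mulRight k T.e₁ ∘ₗ LinearMap.mulLeft k T.e₁
  let g : R →ₗ[k] R := LinearMap.mulLeft k T.e₁ ∘ₗ T.EM1
  have hgen : Set.EqOn f g {x | ∃ a ∈ T.A, ∃ a' ∈ T.A, x = a * T.e₂ * a'} := by
    rintro _ ⟨a, ha, a', ha', rfl⟩
    have hcomm := (T.commute_e₁_of_mem_A ha).eq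
    simp only [f, g, LinearMap.comp_apply, LinearMap.mulLeft_apply, LinearMap.mulRight_apply,
      T.EM1_mul_e₂_mul ha.1 ha'.1]
    calc T.e₁ * (a * T.e₂ * a') * T.e₁ = T.e₁ * a * T.e₂ * (a' * T.e₁) := by
          simp only [mul_assoc]
      _ = a * (T.e₁ * T.e₂ * T.e₁) * a' := by
          rw [← hcomm, (T.commute_e₁_of_mem_A ha').eq]
          simp only [mul_assoc]
      _ = T.e₁ * T.lam • (a * a') := by
          rw [T.hbraid₁, mul_smul_comm, smul_mul_assoc, mul_smul_comm, ← mul_assoc, hcomm]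
  exact LinearMap.eqOn_span' hgen (T.C_le_span_A_e₂_A hc)

end JonesTower

theorem depth_two_property_general (T : JonesTower k R) :
    Subalgebra.toSubmodule T.C =
      Submodule.span k {x : R | ∃ a ∈ T.A, ∃ a' ∈ T.A, x = a * T.e₂ * a'} ∧
    Subalgebra.toSubmodule T.C =
      Submodule.span k {x : R | ∃ b ∈ T.B, ∃ b' ∈ T.B, x = b * T.e₁ * b'} ∧
    ∀ c ∈ T.C, T.e₁ * c * T.e₁ = T.e₁ * T.EM1 c := by
  have hC : Subalgebra.toSubmodule T.C =
      Submodule.span k {x : R | ∃ a ∈ T.A, ∃ a' ∈ T.A, x = a * T.e₂ * a'} :=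
    le_antisymm T.C_le_span_A_e₂_A (Submodule.span_mul_mul_le_of_le T.A_le_C T.e₂_mem_C)
  refine ⟨hC, le_antisymm (hC.le.trans T.span_A_e₂_A_le_span_B_e₁_B) ?_,
    fun c hc => T.e₁_mul_mul_e₁_eq_e₁_mul_EM1 hc⟩
  exact Submodule.span_mul_mul_le_of_le T.B_le_C (T.A_le_C T.e₁_mem_A)

/-- **Depth 2 property.** `C = span{a e₂ a' : a, a' ∈ A} = span{b e₁ b' : b, b' ∈ B}`,
and `e₁ c e₁ = e₁ E_{M₁}(c)` for every `c ∈ C`. -/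
theorem depth_two_property (T : JonesTower k R) [Nontrivial R] :
    Subalgebra.toSubmodule T.C =
      Submodule.span k {x : R | ∃ a ∈ T.A, ∃ a' ∈ T.A, x = a * T.e₂ * a'} ∧
    Subalgebra.toSubmodule T.C =
      Submodule.span k {x : R | ∃ b ∈ T.B, ∃ b' ∈ T.B, x = b * T.e₁ * b'} ∧
    ∀ c ∈ T.C, T.e₁ * c * T.e₁ = T.e₁ * T.EM1 c :=
  depth_two_property_general T
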